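/- arXiv:2409.18667 — 8 statements merged into one kernel-verified Lean document; each statement's English description precedes it below -/
import Mathlib

section
/- TeamLTL is not union closed: for the teams T = {{p}∅^ω} and T' = {∅{p}∅^ω} (where {p}∅^ω is the trace whose first letter is {p} and all further letters are ∅, and ∅{p}∅^ω has {p} as its second letter and ∅ everywhere else), one has T ⊨ Fp and T' ⊨ Fp but T ∪ T' ⊭ Fp under team semantics. -/
namespace TeamLTL

/-- A trace over a set `AP` of atomic propositions: an infinite sequence of letters,
each letter being a set of atomic propositions. -/
abbrev Trace (AP : Type) : Type := ℕ → Set AP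

/-- The suffix `t[i,∞)` of a trace. -/
def Trace.shift {AP : Type} (t : Trace AP) (i : ℕ) : Trace AP := fun n => t (n + i)

/-- The suffix team `T[i,∞) = { t[i,∞) | t ∈ T }`. -/
def teamShift {AP : Type} (T : Set (Trace AP)) (i : ℕ) : Set (Trace AP) :=
  (fun t => Trace.shift t i) '' T

/-- LTL formulae in negation normal form. -/
inductive LTL (AP : Type) : Type
  | atom : AP → LTL AP
  | natom : AP → LTL AP
  | conj : LTL AP → LTL AP → LTL AP
  | disj : LTL AP → LTL AP → LTL AP
  | next : LTL AP → LTL AP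
  | untl : LTL AP → LTL AP → LTL AP
  | rels : LTL AP → LTL AP → LTL AP

/-- Team semantics for LTL: `TeamSat T φ` means `T ⊨ φ`. -/
def TeamSat {AP : Type} : Set (Trace AP) → LTL AP → Prop
  | T, .atom p => ∀ t ∈ T, p ∈ t 0
  | T, .natom p => ∀ t ∈ T, p ∉ t 0
  | T, .conj φ ψ => TeamSat T φ ∧ TeamSat T ψ
  | T, .disj φ ψ => ∃ T₁ T₂ : Set (Trace AP), T₁ ∪ T₂ = T ∧ TeamSat T₁ φ ∧ TeamSat T₂ ψ
  | T, .next φ => TeamSat (teamShift T 1) φ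
  | T, .untl φ ψ => ∃ k : ℕ, TeamSat (teamShift T k) ψ ∧ ∀ k' < k, TeamSat (teamShift T k') φ
  | T, .rels φ ψ => ∀ k : ℕ, TeamSat (teamShift T k) ψ ∨ ∃ k' < k, TeamSat (teamShift T k') φ

/-- Classical semantics for LTL on a single trace: `Sat t φ` means `t ⊨ φ`. -/
def Sat {AP : Type} : Trace AP → LTL AP → Prop
  | t, .atom p => p ∈ t 0
  | t, .natom p => p ∉ t 0
  | t, .conj φ ψ => Sat t φ ∧ Sat t ψ
  | t, .disj φ ψ => Sat t φ ∨ Sat t ψ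
  | t, .next φ => Sat (Trace.shift t 1) φ
  | t, .untl φ ψ => ∃ k : ℕ, Sat (Trace.shift t k) ψ ∧ ∀ k' < k, Sat (Trace.shift t k') φ
  | t, .rels φ ψ => ∀ k : ℕ, Sat (Trace.shift t k) ψ ∨ ∃ k' < k, Sat (Trace.shift t k') φ

/-- The eventually operator `F φ := (p ∨ ¬p) U φ`. -/
def eventually {AP : Type} (p : AP) (φ : LTL AP) : LTL AP :=
  .untl (.disj (.atom p) (.natom p)) φ

/-- The trace `{p}∅^ω`. -/
def trA (p : ℕ) : Trace ℕ := fun n => if n = 0 then {p} else ∅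

/-- The trace `∅{p}∅^ω`. -/
def trB (p : ℕ) : Trace ℕ := fun n => if n = 1 then {p} else ∅

/-- TeamLTL is not union closed: `{trA p} ⊨ F p` and `{trB p} ⊨ F p`,
but `{trA p} ∪ {trB p} ⊭ F p`. -/
theorem not_union_closed (p : ℕ) :
    TeamSat ({trA p} : Set (Trace ℕ)) (eventually p (.atom p)) ∧
    TeamSat ({trB p} : Set (Trace ℕ)) (eventually p (.atom p)) ∧
    ¬ TeamSat (({trA p} : Set (Trace ℕ)) ∪ {trB p}) (eventually p (.atom p)) := by
  refine ⟨?_, ?_, ?_⟩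
  · -- {trA p} ⊨ F p with k = 0
    refine ⟨0, ?_, ?_⟩
    · intro t ht
      rcases ht with ⟨s, hs, rfl⟩
      simp only [Set.mem_singleton_iff] at hs
      subst hs
      simp [Trace.shift, trA]
    · intro k' hk'; omega
  · -- {trB p} ⊨ F p with k = 1
    refine ⟨1, ?_, ?_⟩
    · intro t ht
      rcases ht with ⟨s, hs, rfl⟩
      simp only [Set.mem_singleton_iff] at hs
      subst hs
      simp [Trace.shift, trB]
    · intro k' hk'
      interval_cases k'
      refine ⟨∅, teamShift {trB p} 0, by simp, by intro t ht; exact absurd ht (Set.notMem_empty t), ?_⟩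
      intro t ht
      rcases ht with ⟨s, hs, rfl⟩
      simp only [Set.mem_singleton_iff] at hs
      subst hs
      simp [Trace.shift, trB]
  · rintro ⟨k, hk, -⟩
    have hA := hk (Trace.shift (trA p) k) ⟨trA p, Or.inl rfl, rfl⟩
    have hB := hk (Trace.shift (trB p) k) ⟨trB p, Or.inr rfl, rfl⟩
    simp [Trace.shift, trA, trB] at hA hB
    omega

end TeamLTL
end

section
/- TeamLTL does not have the flatness property: for the team T = {{p}∅^ω, ∅{p}∅^ω} (where {p}∅^ω is the trace whose first letter is {p} and all further letters are ∅, and ∅{p}∅^ω has {p} as its second letter and ∅ everywhere else), every singleton subteam {t} ⊆ T satisfies Fp under team semantics, but T ⊭ Fp. -/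
namespace TeamLTL

/-- TeamLTL is not flat: every singleton subteam of
`T = {trA p, trB p}` satisfies `F p`, but `T` itself does not. -/
theorem not_flat (p : ℕ) :
    (∀ t ∈ ({trA p, trB p} : Set (Trace ℕ)),
      TeamSat ({t} : Set (Trace ℕ)) (eventually p (.atom p))) ∧
    ¬ TeamSat ({trA p, trB p} : Set (Trace ℕ)) (eventually p (.atom p)) := by
  constructor
  · rintro t (rfl | rfl)
    · refine ⟨0, ?_, by omega⟩
      simp only [teamShift, Set.image_singleton, TeamSat]
      rintro t rfl
      simp [Trace.shift, trA]
    · refine ⟨1, ?_, ?_⟩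
      · simp only [teamShift, Set.image_singleton, TeamSat]
        rintro t rfl
        simp [Trace.shift, trB]
      · intro k' hk'
        refine ⟨∅, {Trace.shift (trB p) k'}, by simp [teamShift], by simp [TeamSat], ?_⟩
        simp only [TeamSat]
        rintro t rfl
        simp [Trace.shift, trB, show k' = 0 by omega]
  · rintro ⟨k, hk, -⟩
    simp only [TeamSat, teamShift] at hk
    have h1 := hk _ ⟨trA p, Or.inl rfl, rfl⟩
    have h2 := hk _ ⟨trB p, Or.inr rfl, rfl⟩
    simp [Trace.shift, trA, trB] at h1 h2
    omega

end TeamLTL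
end

section
/- Bounded unwinding of until and release on finite teams of ultimately periodic traces: let T = {u₁v₁^ω, …, u_nv_n^ω} be a finite team of ultimately periodic traces (u_j finite traces, v_j nonempty finite traces), let s = max_j |u_j| and p = lcm{|v_j| : 1 ≤ j ≤ n}. Then for all LTL formulae ψ, φ: (i) T ⊨ ψUφ iff there exists k ≤ s+p with T[k,∞) ⊨ φ and T[k',∞) ⊨ ψ for all k' < k; and (ii) T ⊨ ψRφ iff for all k ≤ s+p, T[k,∞) ⊨ φ or there exists k' < k with T[k',∞) ⊨ ψ. -/
/-!
A team of ultimately periodic traces is itself ultimately periodic: once past all prefixes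
(index `s`), every trace repeats with period `p`, hence so does the suffix team `T[k,∞)`. So every
suffix team `T[k,∞)` already occurs as some `T[k₀,∞)` with `k₀ ≤ k` and `k₀ < s + p`, and the
quantifier over `k` in the semantics of `U` and `R` may be cut down to `k ≤ s + p`.
-/

namespace TeamLTL

/-- The ultimately periodic trace `u v^ω` determined by a finite trace `u`
and a nonempty finite trace `v`. -/
def upTrace (u v : List (Set ℕ)) (hv : v ≠ []) : Trace ℕ := fun n =>
  if h : n < u.length then u.get ⟨n, h⟩
  else v.get ⟨(n - u.length) % v.length, Nat.mod_lt _ (List.length_pos_iff.mpr hv)⟩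

/-- The finite team `{u₁v₁^ω, …, u_nv_n^ω}` of ultimately periodic traces. -/
def upTeam (n : ℕ) (u v : Fin n → List (Set ℕ)) (hv : ∀ j, v j ≠ []) :
    Set (Trace ℕ) :=
  Set.range fun j => upTrace (u j) (v j) (hv j)

section EventuallyPeriodic

variable {AP : Type} {T : Set (Trace AP)} {s p : ℕ}

theorem teamShift_add_of_periodic (hT : ∀ t ∈ T, ∀ n, s ≤ n → t (n + p) = t n) {k : ℕ}
    (hk : s ≤ k) : teamShift T (k + p) = teamShift T k := by
  refine Set.image_congr fun t ht => funext fun i => ?_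
  simp only [Trace.shift, ← add_assoc]
  exact hT t ht (i + k) (by omega)

theorem exists_teamShift_eq_of_lt (hT : ∀ t ∈ T, ∀ n, s ≤ n → t (n + p) = t n) (hp : 0 < p)
    (k : ℕ) : ∃ k₀ ≤ k, k₀ < s + p ∧ teamShift T k₀ = teamShift T k := by
  by_cases hk : k < s
  · exact ⟨k, le_rfl, by omega, rfl⟩
  have hperiodic : Function.Periodic (fun m => teamShift T (s + m)) p := fun m => by
    simpa only [add_assoc] using teamShift_add_of_periodic hT (Nat.le_add_right s m)
  have hmod : teamShift T (s + (k - s) % p) = teamShift T k := by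
    simpa only [Nat.add_sub_cancel' (not_lt.mp hk)] using hperiodic.map_mod_nat (k - s)
  exact ⟨s + (k - s) % p, by have := Nat.mod_le (k - s) p; omega,
    by have := Nat.mod_lt (k - s) hp; omega, hmod⟩

theorem teamSat_untl_iff_exists_le (hT : ∀ t ∈ T, ∀ n, s ≤ n → t (n + p) = t n) (hp : 0 < p)
    (ψ φ : LTL AP) :
    TeamSat T (.untl ψ φ) ↔
      ∃ k ≤ s + p, TeamSat (teamShift T k) φ ∧ ∀ k' < k, TeamSat (teamShift T k') ψ := by
  refine ⟨fun ⟨k, hφ, hψ⟩ => ?_, fun ⟨k, _, hk⟩ => ⟨k, hk⟩⟩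
  obtain ⟨k₀, hk₀k, hk₀, heq⟩ := exists_teamShift_eq_of_lt hT hp k
  exact ⟨k₀, hk₀.le, heq ▸ hφ, fun k' hk' => hψ k' (by omega)⟩

theorem teamSat_rels_iff_forall_le (hT : ∀ t ∈ T, ∀ n, s ≤ n → t (n + p) = t n) (hp : 0 < p)
    (ψ φ : LTL AP) :
    TeamSat T (.rels ψ φ) ↔
      ∀ k ≤ s + p, TeamSat (teamShift T k) φ ∨ ∃ k' < k, TeamSat (teamShift T k') ψ := by
  refine ⟨fun h k _ => h k, fun h k => ?_⟩
  obtain ⟨k₀, hk₀k, hk₀, heq⟩ := exists_teamShift_eq_of_lt hT hp k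
  rcases h k₀ hk₀.le with hφ | ⟨k', hk', hψ⟩
  · exact .inl (heq ▸ hφ)
  · exact .inr ⟨k', by omega, hψ⟩

end EventuallyPeriodic

theorem upTrace_add_of_dvd {u v : List (Set ℕ)} (hv : v ≠ []) {n p : ℕ} (hn : u.length ≤ n)
    (hp : v.length ∣ p) : upTrace u v hv (n + p) = upTrace u v hv n := by
  obtain ⟨c, rfl⟩ := hp
  simp only [upTrace, dif_neg (show ¬ n + v.length * c < u.length by omega),
    dif_neg (show ¬ n < u.length by omega), Nat.sub_add_comm hn, Nat.add_mul_mod_self_left]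

theorem upTeam_add_lcm (n : ℕ) (u v : Fin n → List (Set ℕ)) (hv : ∀ j, v j ≠ []) :
    ∀ t ∈ upTeam n u v hv, ∀ m, (Finset.univ.sup fun j => (u j).length) ≤ m →
      t (m + Finset.univ.lcm fun j => (v j).length) = t m := by
  rintro _ ⟨j, rfl⟩ m hm
  exact upTrace_add_of_dvd (hv j)
    ((Finset.le_sup (f := fun j => (u j).length) (Finset.mem_univ j)).trans hm)
    (Finset.dvd_lcm (f := fun j => (v j).length) (Finset.mem_univ j))

theorem lcm_length_pos (n : ℕ) (v : Fin n → List (Set ℕ)) (hv : ∀ j, v j ≠ []) :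
    0 < Finset.univ.lcm fun j => (v j).length :=
  Nat.pos_of_ne_zero <| Finset.lcm_ne_zero_iff.mpr fun j _ =>
    (List.length_pos_iff.mpr (hv j)).ne'

/-- Bounded unwinding of until and release on finite teams of
ultimately periodic traces, with bound `s + p` where `s = max_j |u_j|` and
`p = lcm_j |v_j|`. -/
theorem bounded_unwinding (n : ℕ) (u v : Fin n → List (Set ℕ))
    (hv : ∀ j, v j ≠ []) (ψ φ : LTL ℕ) :
    (TeamSat (upTeam n u v hv) (.untl ψ φ) ↔
      ∃ k ≤ (Finset.univ.sup fun j => (u j).length) +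
              (Finset.univ.lcm fun j => (v j).length),
        TeamSat (teamShift (upTeam n u v hv) k) φ ∧
        ∀ k' < k, TeamSat (teamShift (upTeam n u v hv) k') ψ) ∧
    (TeamSat (upTeam n u v hv) (.rels ψ φ) ↔
      ∀ k ≤ (Finset.univ.sup fun j => (u j).length) +
              (Finset.univ.lcm fun j => (v j).length),
        TeamSat (teamShift (upTeam n u v hv) k) φ ∨
        ∃ k' < k, TeamSat (teamShift (upTeam n u v hv) k') ψ) :=
  ⟨teamSat_untl_iff_exists_le (upTeam_add_lcm n u v hv) (lcm_length_pos n v hv) ψ φ,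
    teamSat_rels_iff_forall_le (upTeam_add_lcm n u v hv) (lcm_length_pos n v hv) ψ φ⟩

end TeamLTL
end

section
/- Team satisfiability coincides with classical satisfiability for LTL: for every LTL formula φ, there exists a non-empty team T with T ⊨ φ under team semantics if and only if there exists a trace t with t ⊨ φ under classical LTL semantics. -/
namespace TeamLTL

/-!
Team semantics of LTL is downward closed, and on a singleton team `{t}` it agrees with the
classical semantics on `t` (the empty team, which satisfies every formula, pads the
disjunction case). So a non-empty team satisfying `φ` contains a trace satisfying `φ`, and a
trace satisfying `φ` forms a non-empty team satisfying `φ`.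
-/

section

variable {AP : Type}

lemma teamShift_empty (k : ℕ) : teamShift (∅ : Set (Trace AP)) k = ∅ :=
  Set.image_empty _

lemma teamShift_singleton (t : Trace AP) (k : ℕ) : teamShift {t} k = {t.shift k} :=
  Set.image_singleton

lemma teamShift_mono {T T' : Set (Trace AP)} (h : T' ⊆ T) (k : ℕ) :
    teamShift T' k ⊆ teamShift T k :=
  Set.image_mono h

lemma teamSat_empty (φ : LTL AP) : TeamSat ∅ φ := by
  induction φ with
  | atom | natom => exact fun _ ht => ht.elim
  | conj _ _ ih₁ ih₂ => exact ⟨ih₁, ih₂⟩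
  | disj _ _ ih₁ ih₂ => exact ⟨∅, ∅, Set.union_empty _, ih₁, ih₂⟩
  | next _ ih => simpa only [TeamSat, teamShift_empty] using ih
  | untl _ _ _ ih₂ => exact ⟨0, by simpa only [teamShift_empty] using ih₂, by simp⟩
  | rels _ _ _ ih₂ => exact fun k => .inl (by simpa only [teamShift_empty] using ih₂)

theorem TeamSat.mono {T T' : Set (Trace AP)} {φ : LTL AP} (h : TeamSat T φ) (hsub : T' ⊆ T) :
    TeamSat T' φ := by
  induction φ generalizing T T' with
  | atom | natom => exact fun t ht => h t (hsub ht)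
  | conj _ _ ih₁ ih₂ => exact ⟨ih₁ h.1 hsub, ih₂ h.2 hsub⟩
  | disj _ _ ih₁ ih₂ =>
    obtain ⟨T₁, T₂, hT, h₁, h₂⟩ := h
    refine ⟨T₁ ∩ T', T₂ ∩ T', ?_,
      ih₁ h₁ Set.inter_subset_left, ih₂ h₂ Set.inter_subset_left⟩
    rw [← Set.union_inter_distrib_right, hT, Set.inter_eq_right.2 hsub]
  | next _ ih => exact ih h (teamShift_mono hsub 1)
  | untl _ _ ih₁ ih₂ =>
    obtain ⟨k, hψ, hφ⟩ := h
    exact ⟨k, ih₂ hψ (teamShift_mono hsub k),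
      fun k' hk' => ih₁ (hφ k' hk') (teamShift_mono hsub k')⟩
  | rels _ _ ih₁ ih₂ =>
    refine fun k => (h k).imp (fun hψ => ih₂ hψ (teamShift_mono hsub k)) ?_
    rintro ⟨k', hk', hφ⟩
    exact ⟨k', hk', ih₁ hφ (teamShift_mono hsub k')⟩

theorem teamSat_singleton_iff {t : Trace AP} {φ : LTL AP} : TeamSat {t} φ ↔ Sat t φ := by
  induction φ generalizing t with
  | atom | natom => simp [TeamSat, Sat]
  | disj φ ψ ih₁ ih₂ =>
    constructor
    · rintro ⟨T₁, T₂, hT, h₁, h₂⟩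
      have ht : t ∈ T₁ ∪ T₂ := hT ▸ rfl
      exact ht.imp (fun ht => ih₁.1 (h₁.mono (Set.singleton_subset_iff.2 ht)))
        (fun ht => ih₂.1 (h₂.mono (Set.singleton_subset_iff.2 ht)))
    · rintro (h | h)
      · exact ⟨{t}, ∅, Set.union_empty _, ih₁.2 h, teamSat_empty ψ⟩
      · exact ⟨∅, {t}, Set.empty_union _, teamSat_empty φ, ih₂.2 h⟩
  | next _ ih => simp only [TeamSat, Sat, teamShift_singleton, ih]
  | conj _ _ ih₁ ih₂ | untl _ _ ih₁ ih₂ | rels _ _ ih₁ ih₂ =>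
    simp only [TeamSat, Sat, teamShift_singleton, ih₁, ih₂]

end

/-- Team satisfiability coincides with classical satisfiability for LTL. -/
theorem team_sat_iff_classical_sat (φ : LTL ℕ) :
    (∃ T : Set (Trace ℕ), T.Nonempty ∧ TeamSat T φ) ↔ (∃ t : Trace ℕ, Sat t φ) := by
  constructor
  · rintro ⟨T, ⟨t, ht⟩, hT⟩
    exact ⟨t, teamSat_singleton_iff.1 (hT.mono (Set.singleton_subset_iff.2 ht))⟩
  · rintro ⟨t, ht⟩
    exact ⟨{t}, Set.singleton_nonempty t, teamSat_singleton_iff.2 ht⟩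

end TeamLTL
end

section
/- Reduction of splitjunction-free team model checking to classical path checking: let 𝒦 = (W, R, η, w_I) be a finite Kripke structure (R left-total), define S₀ = {w_I} and S_{i+1} = {w' ∈ W : (w,w') ∈ R for some w ∈ S_i}, and define the trace t over the atomic propositions AP ∪ {p̄ : p ∈ AP} by t(i) = {p ∈ AP : p ∈ η(w) for all w ∈ S_i} ∪ {p̄ : p ∉ η(w) for all w ∈ S_i}. Then for every splitjunction-free LTL formula φ (i.e., φ contains no ∨): T(𝒦) ⊨ φ under team semantics if and only if t ⊨ φ̄ under classical LTL semantics, where φ̄ is obtained from φ by replacing each negated atomic proposition ¬p by the (positive) atomic proposition p̄, and T(𝒦) = {η(π(0))η(π(1))η(π(2))⋯ : π is a path through 𝒦 with π(0) = w_I}. -/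
namespace TeamLTL

/-- A Kripke structure over the atomic propositions `ℕ`: a finite set of worlds,
a left-total transition relation, a labeling function and an initial world. -/
structure Kripke where
  W : Type
  [instFin : Fintype W]
  R : W → W → Prop
  leftTotal : ∀ w : W, ∃ w' : W, R w w'
  η : W → Set ℕ
  init : W

attribute [instance] Kripke.instFin

/-- The team `T(𝒦)` of traces of the paths through `𝒦` starting at the initial world. -/
def Kripke.traces (K : Kripke) : Set (Trace ℕ) :=
  { t | ∃ π : ℕ → K.W, π 0 = K.init ∧ (∀ i : ℕ, K.R (π i) (π (i + 1))) ∧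
        t = fun i => K.η (π i) }

/-- The sets `S₀ = {w_I}` and `S_{i+1} = {w' | (w,w') ∈ R for some w ∈ S_i}`. -/
def Kripke.layer (K : Kripke) : ℕ → Set K.W
  | 0 => {K.init}
  | i + 1 => { w' | ∃ w ∈ K.layer i, K.R w w' }

/-- The trace `t` over `AP ∪ {p̄ | p ∈ AP}` (realised as `ℕ ⊕ ℕ`, with `inl p = p`
and `inr p = p̄`) given by
`t(i) = {p | ∀ w ∈ S_i, p ∈ η(w)} ∪ {p̄ | ∀ w ∈ S_i, p ∉ η(w)}`. -/
def Kripke.barTrace (K : Kripke) : Trace (ℕ ⊕ ℕ) := fun i =>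
  (Sum.inl '' { p : ℕ | ∀ w ∈ K.layer i, p ∈ K.η w }) ∪
  (Sum.inr '' { p : ℕ | ∀ w ∈ K.layer i, p ∉ K.η w })

/-- `φ` is splitjunction-free: it contains no `∨`. -/
def SplitFree {AP : Type} : LTL AP → Prop
  | .atom _ => True
  | .natom _ => True
  | .conj φ ψ => SplitFree φ ∧ SplitFree ψ
  | .disj _ _ => False
  | .next φ => SplitFree φ
  | .untl φ ψ => SplitFree φ ∧ SplitFree ψ
  | .rels φ ψ => SplitFree φ ∧ SplitFree ψ

/-- `φ̄`: replace each negated atomic proposition `¬p` by the fresh positive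
atomic proposition `p̄ = inr p` (and each `p` by `inl p`). -/
def bar {AP : Type} : LTL AP → LTL (AP ⊕ AP)
  | .atom p => .atom (.inl p)
  | .natom p => .atom (.inr p)
  | .conj φ ψ => .conj (bar φ) (bar ψ)
  | .disj φ ψ => .disj (bar φ) (bar ψ)
  | .next φ => .next (bar φ)
  | .untl φ ψ => .untl (bar φ) (bar ψ)
  | .rels φ ψ => .rels (bar φ) (bar ψ)

section Aux

variable (K : Kripke)

/-- Successor set of a set of worlds. -/
def succSet (S : Set K.W) : Set K.W := { w' | ∃ w ∈ S, K.R w w' }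

/-- Layers starting from an arbitrary set. -/
def layerFrom (S : Set K.W) : ℕ → Set K.W
  | 0 => S
  | i + 1 => succSet K (layerFrom S i)

/-- Traces of paths starting anywhere in `S`. -/
def tracesFrom (S : Set K.W) : Set (Trace ℕ) :=
  { t | ∃ π : ℕ → K.W, π 0 ∈ S ∧ (∀ i : ℕ, K.R (π i) (π (i + 1))) ∧
        t = fun i => K.η (π i) }

/-- Bar trace relative to a starting set. -/
def barFrom (S : Set K.W) : Trace (ℕ ⊕ ℕ) := fun i =>
  (Sum.inl '' { p : ℕ | ∀ w ∈ layerFrom K S i, p ∈ K.η w }) ∪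
  (Sum.inr '' { p : ℕ | ∀ w ∈ layerFrom K S i, p ∉ K.η w })

lemma exists_path (w : K.W) :
    ∃ π : ℕ → K.W, π 0 = w ∧ ∀ i : ℕ, K.R (π i) (π (i + 1)) := by
  choose f hf using K.leftTotal
  refine ⟨fun n => f^[n] w, rfl, fun i => ?_⟩
  show K.R (f^[i] w) (f^[i+1] w)
  rw [Function.iterate_succ_apply']
  exact hf _

lemma succSet_nonempty {S : Set K.W} (hS : S.Nonempty) : (succSet K S).Nonempty := by
  obtain ⟨w, hw⟩ := hS
  obtain ⟨w', hw'⟩ := K.leftTotal w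
  exact ⟨w', w, hw, hw'⟩

lemma layerFrom_nonempty {S : Set K.W} (hS : S.Nonempty) (k : ℕ) :
    (layerFrom K S k).Nonempty := by
  induction k with
  | zero => exact hS
  | succ k ih => exact succSet_nonempty K ih

lemma shift_zero {AP : Type} (t : Trace AP) : Trace.shift t 0 = t := by
  funext n; simp [Trace.shift]

lemma teamShift_zero {AP : Type} (T : Set (Trace AP)) : teamShift T 0 = T := by
  simp [teamShift, shift_zero]

lemma shift_one_shift {AP : Type} (t : Trace AP) (k : ℕ) :
    Trace.shift (Trace.shift t 1) k = Trace.shift t (k + 1) := by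
  funext n; simp [Trace.shift, Nat.add_assoc]

lemma teamShift_succ {AP : Type} (T : Set (Trace AP)) (k : ℕ) :
    teamShift T (k + 1) = teamShift (teamShift T 1) k := by
  simp only [teamShift, Set.image_image, shift_one_shift]

lemma layerFrom_succSet (S : Set K.W) (k : ℕ) :
    layerFrom K (succSet K S) k = layerFrom K S (k + 1) := by
  induction k with
  | zero => rfl
  | succ k ih => simp [layerFrom, ih]

lemma teamShift_tracesFrom_one (S : Set K.W) :
    teamShift (tracesFrom K S) 1 = tracesFrom K (succSet K S) := by
  ext t
  constructor
  · rintro ⟨t', ⟨π, hπ0, hπR, rfl⟩, rfl⟩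
    refine ⟨fun i => π (i + 1), ⟨π 0, hπ0, hπR 0⟩, fun i => hπR (i + 1), ?_⟩
    funext n; simp [Trace.shift]
  · rintro ⟨π, ⟨w, hwS, hwR⟩, hπR, rfl⟩
    refine ⟨fun i => K.η ((fun n => Nat.rec w (fun m _ => π m) n) i),
      ⟨fun n => Nat.rec w (fun m _ => π m) n, hwS, ?_, rfl⟩, ?_⟩
    · intro i
      cases i with
      | zero => exact hwR
      | succ i => exact hπR i
    · funext n; simp [Trace.shift]

lemma teamShift_tracesFrom (S : Set K.W) (k : ℕ) :
    teamShift (tracesFrom K S) k = tracesFrom K (layerFrom K S k) := by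
  induction k generalizing S with
  | zero => exact teamShift_zero _
  | succ k ih =>
      rw [teamShift_succ, teamShift_tracesFrom_one, ih, layerFrom_succSet]

lemma shift_barFrom_one (S : Set K.W) :
    Trace.shift (barFrom K S) 1 = barFrom K (succSet K S) := by
  funext n
  simp [Trace.shift, barFrom, layerFrom_succSet]

lemma shift_barFrom (S : Set K.W) (k : ℕ) :
    Trace.shift (barFrom K S) k = barFrom K (layerFrom K S k) := by
  induction k generalizing S with
  | zero => exact shift_zero _
  | succ k ih =>
      rw [← shift_one_shift, shift_barFrom_one, ih, layerFrom_succSet]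

lemma mem_barFrom_inl (S : Set K.W) (p : ℕ) :
    Sum.inl p ∈ barFrom K S 0 ↔ ∀ w ∈ S, p ∈ K.η w := by
  simp [barFrom, layerFrom]

lemma mem_barFrom_inr (S : Set K.W) (p : ℕ) :
    Sum.inr p ∈ barFrom K S 0 ↔ ∀ w ∈ S, p ∉ K.η w := by
  simp [barFrom, layerFrom]

lemma key (φ : LTL ℕ) (hφ : SplitFree φ) :
    ∀ S : Set K.W, S.Nonempty →
      (TeamSat (tracesFrom K S) φ ↔ Sat (barFrom K S) (bar φ)) := by
  induction φ with
  | atom p =>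
      intro S hS
      rw [show bar (.atom p) = .atom (Sum.inl p) from rfl]
      simp only [TeamSat, Sat, mem_barFrom_inl]
      constructor
      · intro h w hw
        obtain ⟨π, hπ0, hπR⟩ := exists_path K w
        have := h (fun i => K.η (π i)) ⟨π, hπ0 ▸ hw, hπR, rfl⟩
        simpa [hπ0] using this
      · rintro h t ⟨π, hπ0, hπR, rfl⟩
        exact h _ hπ0
  | natom p =>
      intro S hS
      rw [show bar (.natom p) = .atom (Sum.inr p) from rfl]
      simp only [TeamSat, Sat, mem_barFrom_inr]
      constructor
      · intro h w hw
        obtain ⟨π, hπ0, hπR⟩ := exists_path K w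
        have := h (fun i => K.η (π i)) ⟨π, hπ0 ▸ hw, hπR, rfl⟩
        simpa [hπ0] using this
      · rintro h t ⟨π, hπ0, hπR, rfl⟩
        exact h _ hπ0
  | conj φ ψ ihφ ihψ =>
      intro S hS
      simp only [TeamSat, Sat, bar]
      rw [ihφ hφ.1 S hS, ihψ hφ.2 S hS]
  | disj φ ψ _ _ => exact absurd hφ (by simp [SplitFree])
  | next φ ihφ =>
      intro S hS
      simp only [TeamSat, Sat, bar]
      rw [teamShift_tracesFrom, shift_barFrom]
      exact ihφ hφ _ (layerFrom_nonempty K hS 1)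
  | untl φ ψ ihφ ihψ =>
      intro S hS
      simp only [TeamSat, Sat, bar]
      constructor
      · rintro ⟨k, hk, hk'⟩
        refine ⟨k, ?_, fun k' hlt => ?_⟩
        · rw [shift_barFrom]
          rw [teamShift_tracesFrom] at hk
          exact (ihψ hφ.2 _ (layerFrom_nonempty K hS k)).mp hk
        · rw [shift_barFrom]
          have := hk' k' hlt
          rw [teamShift_tracesFrom] at this
          exact (ihφ hφ.1 _ (layerFrom_nonempty K hS k')).mp this
      · rintro ⟨k, hk, hk'⟩
        refine ⟨k, ?_, fun k' hlt => ?_⟩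
        · rw [teamShift_tracesFrom]
          rw [shift_barFrom] at hk
          exact (ihψ hφ.2 _ (layerFrom_nonempty K hS k)).mpr hk
        · rw [teamShift_tracesFrom]
          have := hk' k' hlt
          rw [shift_barFrom] at this
          exact (ihφ hφ.1 _ (layerFrom_nonempty K hS k')).mpr this
  | rels φ ψ ihφ ihψ =>
      intro S hS
      simp only [TeamSat, Sat, bar]
      constructor
      · intro h k
        rcases h k with hk | ⟨k', hlt, hk'⟩
        · left
          rw [shift_barFrom]
          rw [teamShift_tracesFrom] at hk
          exact (ihψ hφ.2 _ (layerFrom_nonempty K hS k)).mp hk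
        · right
          refine ⟨k', hlt, ?_⟩
          rw [shift_barFrom]
          rw [teamShift_tracesFrom] at hk'
          exact (ihφ hφ.1 _ (layerFrom_nonempty K hS k')).mp hk'
      · intro h k
        rcases h k with hk | ⟨k', hlt, hk'⟩
        · left
          rw [teamShift_tracesFrom]
          rw [shift_barFrom] at hk
          exact (ihψ hφ.2 _ (layerFrom_nonempty K hS k)).mpr hk
        · right
          refine ⟨k', hlt, ?_⟩
          rw [teamShift_tracesFrom]
          rw [shift_barFrom] at hk'
          exact (ihφ hφ.1 _ (layerFrom_nonempty K hS k')).mpr hk'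

lemma traces_eq_tracesFrom : K.traces = tracesFrom K {K.init} := by
  ext t
  simp [Kripke.traces, tracesFrom]

lemma layer_eq_layerFrom (k : ℕ) : K.layer k = layerFrom K {K.init} k := by
  induction k with
  | zero => rfl
  | succ k ih => simp [Kripke.layer, layerFrom, succSet, ih]

lemma barTrace_eq_barFrom : K.barTrace = barFrom K {K.init} := by
  funext i
  simp [Kripke.barTrace, barFrom, layer_eq_layerFrom]

end Aux

/-- Reduction of splitjunction-free team model checking to
classical path checking: `T(𝒦) ⊨ φ` (team semantics) iff `t ⊨ φ̄`
(classical semantics). -/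
theorem splitfree_model_checking (K : Kripke) (φ : LTL ℕ) (hφ : SplitFree φ) :
    TeamSat K.traces φ ↔ Sat K.barTrace (bar φ) := by
  rw [traces_eq_tracesFrom, barTrace_eq_barFrom]
  exact key K φ hφ {K.init} ⟨K.init, rfl⟩

end TeamLTL
end

section
/- No LTL formula under team semantics is equivalent to the HyperLTL sentence ∃π.p_π: there is no LTL formula φ such that for all teams T ⊆ (𝒫(AP))^ω, T ⊨ φ under team semantics if and only if there exists a trace t ∈ T with p ∈ t(0). -/
namespace TeamLTL

lemma empty_teamSat {AP : Type} (φ : LTL AP) : TeamSat (∅ : Set (Trace AP)) φ := by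
  induction φ with
  | atom p => intro t ht; exact absurd ht (Set.notMem_empty t)
  | natom p => intro t ht; exact absurd ht (Set.notMem_empty t)
  | conj φ ψ ihφ ihψ => exact ⟨ihφ, ihψ⟩
  | disj φ ψ ihφ ihψ => exact ⟨∅, ∅, by simp, ihφ, ihψ⟩
  | next φ ih => simpa [TeamSat, teamShift] using ih
  | untl φ ψ ihφ ihψ =>
      refine ⟨0, by simpa [teamShift] using ihψ, fun k' hk' => by omega⟩
  | rels φ ψ ihφ ihψ =>
      intro k; left; simpa [teamShift] using ihψ

/-- No LTL formula with team semantics is equivalent to the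
HyperLTL sentence `∃π. p_π`. -/
theorem no_ltl_formula_for_exists_pi (p : ℕ) :
    ¬ ∃ φ : LTL ℕ, ∀ T : Set (Trace ℕ), TeamSat T φ ↔ ∃ t ∈ T, p ∈ t 0 := by
  rintro ⟨φ, hφ⟩
  have h := (hφ ∅).mp (empty_teamSat φ)
  obtain ⟨t, ht, -⟩ := h
  exact Set.notMem_empty t ht

end TeamLTL
end

section
/- Downward closure of TeamCTL: for every Kripke structure 𝒦, every CTL formula φ, and all teams T, T' of 𝒦, if 𝒦, T ⊨ φ and T' is a sub-multiset of T up to reindexing (T' ⊑ T), then 𝒦, T' ⊨ φ. -/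
/-!
Induction on the formula, for all pairs of teams at once. A split of `T` witnessing a
disjunction induces one of `T'` by multiset intersection and difference. For the path
quantifiers, an injection `ι` of the indices of `T'` into those of `T` carries
compatible functions both ways: a `T`-compatible `f` restricts to `f ∘ ι`, and a
`T'`-compatible `f'` extends to `T` by arbitrary paths (they exist by left-totality)
off the image of `ι`. Either way `T'[f', n] ⊑ T[f, n]` for every `n`.
-/

namespace TeamCTL

/-- A Kripke structure: a finite set of worlds, a left-total transition relation,
and a labeling function. -/
structure Kripke (AP : Type) where
  W : Type
  [instFin : Fintype W]
  R : W → W → Prop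
  leftTotal : ∀ w : W, ∃ w' : W, R w w'
  η : W → Set AP

/-- CTL formulae in negation normal form. -/
inductive CTL (AP : Type) : Type
  | atom : AP → CTL AP
  | natom : AP → CTL AP
  | conj : CTL AP → CTL AP → CTL AP
  | disj : CTL AP → CTL AP → CTL AP
  | ex : CTL AP → CTL AP
  | ax : CTL AP → CTL AP
  | eu : CTL AP → CTL AP → CTL AP
  | au : CTL AP → CTL AP → CTL AP
  | er : CTL AP → CTL AP → CTL AP
  | ar : CTL AP → CTL AP → CTL AP

variable {AP : Type}

/-- `π` is a path of `K` starting at the world `w`. -/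
def IsPathFrom (K : Kripke AP) (w : K.W) (π : ℕ → K.W) : Prop :=
  π 0 = w ∧ ∀ i : ℕ, K.R (π i) (π (i + 1))

/-- A team of `K` is a finite multiset of worlds, represented as a list
(the positions of the list play the role of the indices of the indexed multiset;
multiset equality is list permutation).  A `T`-compatible function assigns to
each (indexed) element of the team a path starting at that world. -/
def Compatible (K : Kripke AP) (T : List K.W) (f : Fin T.length → ℕ → K.W) : Prop :=
  ∀ i : Fin T.length, IsPathFrom K (T.get i) (f i)

/-- `T[f,n]`: the team obtained by synchronously proceeding to the `n`-th element
of each chosen path. -/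
def step (K : Kripke AP) {T : List K.W} (f : Fin T.length → ℕ → K.W) (n : ℕ) : List K.W :=
  List.ofFn fun i => f i n

/-- Team semantics for CTL: `TSat K φ T` means `K, T ⊨ φ`. -/
def TSat (K : Kripke AP) : CTL AP → List K.W → Prop
  | .atom p, T => ∀ w ∈ T, p ∈ K.η w
  | .natom p, T => ∀ w ∈ T, p ∉ K.η w
  | .conj φ ψ, T => TSat K φ T ∧ TSat K ψ T
  | .disj φ ψ, T => ∃ T₁ T₂ : List K.W, (T₁ ++ T₂).Perm T ∧ TSat K φ T₁ ∧ TSat K ψ T₂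
  | .ex φ, T => ∃ f, Compatible K T f ∧ TSat K φ (step K f 1)
  | .ax φ, T => ∀ f, Compatible K T f → TSat K φ (step K f 1)
  | .eu φ ψ, T => ∃ f, Compatible K T f ∧ ∃ k : ℕ,
      TSat K ψ (step K f k) ∧ ∀ j : ℕ, 1 ≤ j → j < k → TSat K φ (step K f j)
  | .au φ ψ, T => ∀ f, Compatible K T f → ∃ k : ℕ,
      TSat K ψ (step K f k) ∧ ∀ j : ℕ, 1 ≤ j → j < k → TSat K φ (step K f j)
  | .er φ ψ, T => ∃ f, Compatible K T f ∧ ∀ k : ℕ,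
      TSat K ψ (step K f k) ∨ ∃ j : ℕ, 1 ≤ j ∧ j < k ∧ TSat K φ (step K f j)
  | .ar φ ψ, T => ∀ f, Compatible K T f → ∀ k : ℕ,
      TSat K ψ (step K f k) ∨ ∃ j : ℕ, 1 ≤ j ∧ j < k ∧ TSat K φ (step K f j)

/-- Classical (pointed) semantics for CTL: `CSat K φ w` means `K, w ⊨ φ`. -/
def CSat (K : Kripke AP) : CTL AP → K.W → Prop
  | .atom p, w => p ∈ K.η w
  | .natom p, w => p ∉ K.η w
  | .conj φ ψ, w => CSat K φ w ∧ CSat K ψ w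
  | .disj φ ψ, w => CSat K φ w ∨ CSat K ψ w
  | .ex φ, w => ∃ π, IsPathFrom K w π ∧ CSat K φ (π 1)
  | .ax φ, w => ∀ π, IsPathFrom K w π → CSat K φ (π 1)
  | .eu φ ψ, w => ∃ π, IsPathFrom K w π ∧ ∃ k : ℕ, CSat K ψ (π k) ∧ ∀ j < k, CSat K φ (π j)
  | .au φ ψ, w => ∀ π, IsPathFrom K w π → ∃ k : ℕ, CSat K ψ (π k) ∧ ∀ j < k, CSat K φ (π j)
  | .er φ ψ, w => ∃ π, IsPathFrom K w π ∧ ∀ k : ℕ, CSat K ψ (π k) ∨ ∃ j < k, CSat K φ (π j)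
  | .ar φ ψ, w => ∀ π, IsPathFrom K w π → ∀ k : ℕ, CSat K ψ (π k) ∨ ∃ j < k, CSat K φ (π j)

/-- `EF φ := E[(p ∨ ¬p) U φ]`. -/
def EF (p : AP) (φ : CTL AP) : CTL AP := .eu (.disj (.atom p) (.natom p)) φ

end TeamCTL

namespace List

open Function

variable {α : Type*}

theorem Subperm.exists_perm_append {l l₁ l₂ : List α} (h : l <+~ l₁ ++ l₂) :
    ∃ m₁ m₂ : List α, m₁ ++ m₂ ~ l ∧ m₁ <+~ l₁ ∧ m₂ <+~ l₂ := by
  classical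
  refine ⟨l.bagInter l₁, l.diff l₁, ?_, ?_, ?_⟩ <;>
    simp only [← Multiset.coe_eq_coe, ← Multiset.coe_le, ← Multiset.coe_add,
      ← Multiset.coe_inter, ← Multiset.coe_sub] at h ⊢
  · rw [add_comm, Multiset.sub_add_inter]
  · exact Multiset.inter_le_right
  · exact tsub_le_iff_left.mpr h

theorem Subperm.get_idxInj [DecidableEq α] {l₁ l₂ : List α} (h : l₁ <+~ l₂)
    (i : Fin l₁.length) : l₂.get (h.idxInj i) = l₁.get i :=
  h.getElem_idxInj_eq_getElem

theorem ofFn_comp_subperm {m n : ℕ} {g : Fin m → Fin n} (hg : Injective g) (v : Fin n → α) :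
    ofFn (v ∘ g) <+~ ofFn v := by
  rw [← Multiset.coe_le, ← Fin.univ_val_map, ← Fin.univ_val_map, ← Multiset.map_map]
  refine Multiset.map_le_map ((Multiset.le_iff_subset ?_).mpr fun i _ => Finset.mem_univ i)
  exact Finset.univ.nodup.map hg

end List

namespace TeamCTL

open Function List

variable {AP : Type}

theorem exists_isPathFrom (K : Kripke AP) (w : K.W) : ∃ π, IsPathFrom K w π := by
  choose next hnext using K.leftTotal
  exact ⟨fun n => next^[n] w, rfl, fun i => by
    simpa only [iterate_succ_apply'] using hnext _⟩

variable {K : Kripke AP} {T T' : List K.W}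

theorem step_comp_subperm {g : Fin T'.length → Fin T.length} (hg : Injective g)
    (f : Fin T.length → ℕ → K.W) (n : ℕ) : step K (f ∘ g) n <+~ step K f n :=
  List.ofFn_comp_subperm hg fun i => f i n

theorem Compatible.restrict (hsub : T' <+~ T) {f : Fin T.length → ℕ → K.W}
    (hf : Compatible K T f) :
    ∃ f', Compatible K T' f' ∧ ∀ n, step K f' n <+~ step K f n := by
  classical
  exact ⟨f ∘ hsub.idxInj, fun i => hsub.get_idxInj i ▸ hf (hsub.idxInj i),
    step_comp_subperm hsub.idxInj_injective f⟩

theorem Compatible.extend (hsub : T' <+~ T) {f' : Fin T'.length → ℕ → K.W}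
    (hf' : Compatible K T' f') :
    ∃ f, Compatible K T f ∧ ∀ n, step K f' n <+~ step K f n := by
  classical
  choose π hπ using exists_isPathFrom K
  have hg := hsub.idxInj_injective
  let f := Function.extend hsub.idxInj f' fun i => π (T.get i)
  refine ⟨f, fun i => ?_, fun n => ?_⟩
  · by_cases hi : ∃ j, hsub.idxInj j = i
    · obtain ⟨j, rfl⟩ := hi
      simp only [f, hg.extend_apply, hsub.get_idxInj]
      exact hf' j
    · simp only [f, extend_apply' _ _ _ hi]
      exact hπ _
  · simpa only [f, extend_comp hg] using step_comp_subperm hg f n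

theorem TSat.of_subperm {φ : CTL AP} (h : TSat K φ T) (hsub : T' <+~ T) : TSat K φ T' := by
  induction φ generalizing T T' with
  | atom p => exact fun w hw => h w (hsub.subset hw)
  | natom p => exact fun w hw => h w (hsub.subset hw)
  | conj φ ψ ihφ ihψ => exact ⟨ihφ h.1 hsub, ihψ h.2 hsub⟩
  | disj φ ψ ihφ ihψ =>
      obtain ⟨T₁, T₂, hperm, h₁, h₂⟩ := h
      obtain ⟨T₁', T₂', hperm', hsub₁, hsub₂⟩ :=
        (hsub.trans hperm.symm.subperm).exists_perm_append
      exact ⟨T₁', T₂', hperm', ihφ h₁ hsub₁, ihψ h₂ hsub₂⟩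
  | ex φ ih =>
      obtain ⟨f, hf, hφ⟩ := h
      obtain ⟨f', hf', hstep⟩ := hf.restrict hsub
      exact ⟨f', hf', ih hφ (hstep 1)⟩
  | ax φ ih =>
      intro f' hf'
      obtain ⟨f, hf, hstep⟩ := hf'.extend hsub
      exact ih (h f hf) (hstep 1)
  | eu φ ψ ihφ ihψ =>
      obtain ⟨f, hf, k, hψ, hφ⟩ := h
      obtain ⟨f', hf', hstep⟩ := hf.restrict hsub
      exact ⟨f', hf', k, ihψ hψ (hstep k), fun j h₁ h₂ => ihφ (hφ j h₁ h₂) (hstep j)⟩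
  | au φ ψ ihφ ihψ =>
      intro f' hf'
      obtain ⟨f, hf, hstep⟩ := hf'.extend hsub
      obtain ⟨k, hψ, hφ⟩ := h f hf
      exact ⟨k, ihψ hψ (hstep k), fun j h₁ h₂ => ihφ (hφ j h₁ h₂) (hstep j)⟩
  | er φ ψ ihφ ihψ =>
      obtain ⟨f, hf, hk⟩ := h
      obtain ⟨f', hf', hstep⟩ := hf.restrict hsub
      exact ⟨f', hf', fun k => (hk k).imp (ihψ · (hstep k))
        fun ⟨j, h₁, h₂, hφ⟩ => ⟨j, h₁, h₂, ihφ hφ (hstep j)⟩⟩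
  | ar φ ψ ihφ ihψ =>
      intro f' hf' k
      obtain ⟨f, hf, hstep⟩ := hf'.extend hsub
      exact (h f hf k).imp (ihψ · (hstep k))
        fun ⟨j, h₁, h₂, hφ⟩ => ⟨j, h₁, h₂, ihφ hφ (hstep j)⟩

/-- Downward closure of TeamCTL: if `𝒦,T ⊨ φ` and `T'` is a
sub-multiset of `T` up to reindexing (here: `T'` is a subpermutation of the
list `T`), then `𝒦,T' ⊨ φ`. -/
theorem downward_closure (K : Kripke ℕ) (φ : CTL ℕ) (T T' : List K.W)
    (h : TSat K φ T) (hsub : T'.Subperm T) :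
    TSat K φ T' :=
  h.of_subperm hsub

end TeamCTL
end

section
/- TeamCTL is neither union closed nor flat: there exist a finite Kripke structure 𝒦 and two worlds w₁, w₂ of 𝒦 such that 𝒦, ⟦w₁⟧ ⊨ EF p and 𝒦, ⟦w₂⟧ ⊨ EF p under team semantics, but 𝒦, ⟦w₁, w₂⟧ ⊭ EF p. (A witness is the structure consisting of two disjoint chains with terminal self-loops, where p is labeled at the third world of the first chain and at the second world of the second chain, and the formula EF p := E[(p∨¬p) U p].) -/
namespace TeamCTL

variable {AP : Type}

/-! Every team satisfies `p ∨ ¬p` (split it by the truth of `p`), so `EF q` holds on a team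
iff the members can be sent along paths that sit at `q`-worlds at one common time `k`.
When every world has a unique successor the paths are forced, and `EF q` says that a single
`k` moves all members into `q`. On two chains where `p` is reached at time `2` from the
first start and at time `1` from the second, each singleton satisfies `EF p` but their
union does not. -/

theorem tSat_atom_or_natom (K : Kripke AP) (p : AP) (T : List K.W) :
    TSat K (.disj (.atom p) (.natom p)) T := by
  classical
  refine ⟨_, _, List.filter_append_perm (fun w => decide (p ∈ K.η w)) T, ?_, ?_⟩
  · intro w hw
    simpa using (List.mem_filter.mp hw).2
  · intro w hw
    simpa using (List.mem_filter.mp hw).2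

theorem tSat_EF_atom_iff (K : Kripke AP) (p q : AP) (T : List K.W) :
    TSat K (EF p (.atom q)) T ↔
      ∃ f, Compatible K T f ∧ ∃ k, ∀ i, q ∈ K.η (f i k) := by
  simp only [EF, TSat, step, List.forall_mem_ofFn_iff]
  exact exists_congr fun f => and_congr_right fun _ => exists_congr fun k =>
    and_iff_left_of_imp fun _ j _ _ => tSat_atom_or_natom K p _

abbrev Kripke.ofFun {W : Type} [Fintype W] (next : W → W) (η : W → Set AP) : Kripke AP where
  W := W
  R a b := next a = b
  leftTotal w := ⟨next w, rfl⟩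
  η := η

section OfFun

variable {W : Type} [Fintype W] (next : W → W) (η : W → Set AP)

theorem isPathFrom_ofFun_iff (w : W) (π : ℕ → W) :
    IsPathFrom (Kripke.ofFun next η) w π ↔ π = fun n => next^[n] w := by
  constructor
  · rintro ⟨h0, hstep⟩
    funext n
    induction n with
    | zero => exact h0
    | succ n ih => rw [← hstep n, ih, Function.iterate_succ_apply']
  · rintro rfl
    exact ⟨rfl, fun n => (Function.iterate_succ_apply' next n w).symm⟩

theorem compatible_ofFun_iff (T : List W) (f : Fin T.length → ℕ → W) :
    Compatible (Kripke.ofFun next η) T f ↔ f = fun i n => next^[n] (T.get i) := by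
  simp only [Compatible, isPathFrom_ofFun_iff, funext_iff]

theorem tSat_ofFun_EF_atom_iff (p q : AP) (T : List W) :
    TSat (Kripke.ofFun next η) (EF p (.atom q)) T ↔
      ∃ k, ∀ w ∈ T, q ∈ η (next^[k] w) := by
  simp only [tSat_EF_atom_iff, compatible_ofFun_iff, exists_eq_left, List.forall_mem_iff_get]

end OfFun

theorem iterate_eq_iterate_min {α : Type*} {f : α → α} {n : ℕ} (hf : f^[n + 1] = f^[n])
    (k : ℕ) : f^[k] = f^[min k n] := by
  rcases le_total k n with hkn | hnk
  · rw [min_eq_left hkn]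
  · obtain ⟨m, rfl⟩ := Nat.exists_eq_add_of_le hnk
    rw [min_eq_right hnk]
    induction m with
    | zero => rfl
    | succ m ih =>
      rw [← add_assoc, Function.iterate_succ', ih (Nat.le_add_right n m), ← Function.iterate_succ', hf]

/-- The chains `0 → 1 → 2 → 3 ↺` and `4 → 5 → 6 ↺`. -/
def twoChainsNext : Fin 7 → Fin 7 := ![1, 2, 3, 3, 5, 6, 6]

def twoChains (p : ℕ) : Kripke ℕ :=
  Kripke.ofFun twoChainsNext fun w => {q | q = p ∧ (w = 2 ∨ w = 5)}

/-- TeamCTL is neither union closed nor flat: there are a finite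
Kripke structure `𝒦` and worlds `w₁, w₂` with `𝒦,⟦w₁⟧ ⊨ EF p` and
`𝒦,⟦w₂⟧ ⊨ EF p`, but `𝒦,⟦w₁,w₂⟧ ⊭ EF p`. -/
theorem not_union_closed_not_flat (p : ℕ) :
    ∃ (K : Kripke ℕ) (w₁ w₂ : K.W),
      TSat K (EF p (.atom p)) [w₁] ∧
      TSat K (EF p (.atom p)) [w₂] ∧
      ¬ TSat K (EF p (.atom p)) [w₁, w₂] := by
  refine ⟨twoChains p, (0 : Fin 7), (4 : Fin 7), ?_, ?_, ?_⟩ <;>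
    simp only [twoChains, tSat_ofFun_EF_atom_iff, List.forall_mem_cons,
      List.not_mem_nil, IsEmpty.forall_iff, forall_const, Set.mem_ofPred_eq, true_and, and_true]
  · exact ⟨2, by decide⟩
  · exact ⟨1, by decide⟩
  · rintro ⟨k, hk⟩
    -- both chains are stationary after three steps, so only `k ≤ 3` needs checking
    rw [iterate_eq_iterate_min (f := twoChainsNext) (n := 3) (by decide)] at hk
    have hle : min k 3 ≤ 3 := min_le_right k 3
    generalize min k 3 = m at hk hle
    interval_cases m <;> revert hk <;> decide

end TeamCTL
end
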